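/- arXiv:1209.0056 — 2 statements merged into one kernel-verified Lean document; each statement's English description precedes it below -/
import Mathlib

section
/- Let ψ₁,…,ψ_k be formulas such that there exists a distribution D under which each ψ_i is (1-ε_i)-valid, no ψ_i is entailed by the remaining formulas, and ∑_i ε_i < 1. Then there exists a distribution D' under which each ψ_i is (1-ε_i)-valid but the conjunction ψ₁∧⋯∧ψ_k is not (1-∑_i ε_i + δ)-valid for any δ > 0. -/
open Finset in
/-- Optimality of the union bound for classical reasoning: if each `ψ i` is
`(1 - ε i)`-valid under some distribution `D`, no `ψ i` is entailed by the
remaining formulas, and `∑ i, ε i < 1`, then there is a distribution `D'`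
under which each `ψ i` is `(1 - ε i)`-valid but the conjunction
`ψ 1 ∧ ⋯ ∧ ψ k` is not `(1 - ∑ i, ε i + δ)`-valid for any `δ > 0`. -/
theorem union_bound_optimal
    (n k : ℕ) (ψ : Fin k → (Fin n → Bool) → Bool) (ε : Fin k → ℝ)
    (hε : ∀ i, 0 ≤ ε i ∧ ε i ≤ 1)
    (hD : ∃ D : (Fin n → Bool) → ℝ, (∀ x, 0 ≤ D x) ∧
      (∑ x : Fin n → Bool, D x = 1) ∧
      ∀ i, 1 - ε i ≤ ∑ x ∈ univ.filter (fun x => ψ i x = true), D x)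
    (hnotent : ∀ i, ∃ x, (∀ j, j ≠ i → ψ j x = true) ∧ ψ i x = false)
    (hsum : ∑ i, ε i < 1) :
    ∃ D' : (Fin n → Bool) → ℝ, (∀ x, 0 ≤ D' x) ∧
      (∑ x : Fin n → Bool, D' x = 1) ∧
      (∀ i, 1 - ε i ≤ ∑ x ∈ univ.filter (fun x => ψ i x = true), D' x) ∧
      ∀ δ : ℝ, 0 < δ →
        ¬ (1 - ∑ i, ε i + δ ≤
            ∑ x ∈ univ.filter (fun x => ∀ i, ψ i x = true), D' x) := by
  classical
  obtain ⟨D, hDpos, hDsum, hDi⟩ := hD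
  -- there exists a point satisfying all ψ
  have hx0 : ∃ x : Fin n → Bool, ∀ i, ψ i x = true := by
    by_contra h
    push_neg at h
    have key : (1 : ℝ) ≤ ∑ i, ε i := by
      calc (1 : ℝ) = ∑ x : Fin n → Bool, D x := hDsum.symm
        _ ≤ ∑ x : Fin n → Bool, ∑ i, (if ψ i x = false then D x else 0) := by
            apply Finset.sum_le_sum
            intro x _
            obtain ⟨i, hi⟩ := h x
            have hi' : ψ i x = false := by
              cases hψ : ψ i x with
              | false => rfl
              | true => exact absurd hψ hi
            calc D x = (if ψ i x = false then D x else 0) := by simp [hi']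
              _ ≤ ∑ j, (if ψ j x = false then D x else 0) := by
                  apply Finset.single_le_sum (f := fun j => if ψ j x = false then D x else 0)
                  · intro j _
                    split <;> first | exact hDpos x | exact le_rfl
                  · exact Finset.mem_univ i
        _ = ∑ i, ∑ x : Fin n → Bool, (if ψ i x = false then D x else 0) :=
            Finset.sum_comm
        _ ≤ ∑ i, ε i := by
            apply Finset.sum_le_sum
            intro i _
            have hsplit := Finset.sum_filter_add_sum_filter_not Finset.univ
              (fun x => ψ i x = true) D
            have h1 : ∑ x : Fin n → Bool, (if ψ i x = false then D x else 0)
                = ∑ x ∈ Finset.univ.filter (fun x => ¬ (ψ i x = true)), D x := by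
              rw [Finset.sum_filter]
              apply Finset.sum_congr rfl
              intro x _
              cases hψ : ψ i x <;> simp
            rw [h1]
            have := hDi i
            nlinarith [this, hsplit]
    linarith
  obtain ⟨x₀, hx₀⟩ := hx0
  set f : Fin k → (Fin n → Bool) := fun i => Classical.choose (hnotent i) with hf
  have hfspec : ∀ i, (∀ j, j ≠ i → ψ j (f i) = true) ∧ ψ i (f i) = false :=
    fun i => Classical.choose_spec (hnotent i)
  set D' : (Fin n → Bool) → ℝ := fun x =>
    (if x = x₀ then 1 - ∑ i, ε i else 0) + ∑ i, (if x = f i then ε i else 0) with hD'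
  have hnn : ∀ x, 0 ≤ D' x := by
    intro x
    apply add_nonneg
    · split <;> first | linarith | exact le_rfl
    · apply Finset.sum_nonneg
      intro i _
      split <;> first | exact (hε i).1 | exact le_rfl
  refine ⟨D', hnn, ?_, ?_, ?_⟩
  · -- sums to 1
    rw [hD']
    rw [Finset.sum_add_distrib]
    rw [Finset.sum_ite_eq' Finset.univ x₀ (fun _ => 1 - ∑ i, ε i)]
    rw [Finset.sum_comm]
    simp only [Finset.mem_univ, if_true]
    have : ∀ i ∈ (Finset.univ : Finset (Fin k)),
        ∑ x : Fin n → Bool, (if x = f i then ε i else 0) = ε i := by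
      intro i _
      rw [Finset.sum_ite_eq' Finset.univ (f i) (fun _ => ε i)]
      simp
    rw [Finset.sum_congr rfl this]
    ring
  · -- each ψ i valid
    intro i
    rw [hD']
    rw [Finset.sum_add_distrib]
    rw [Finset.sum_ite_eq' _ x₀ (fun _ => 1 - ∑ j, ε j)]
    rw [Finset.sum_comm]
    have hmem : x₀ ∈ Finset.univ.filter (fun x => ψ i x = true) := by
      simp [hx₀ i]
    rw [if_pos hmem]
    have hterm : ∀ j ∈ (Finset.univ : Finset (Fin k)),
        ∑ x ∈ Finset.univ.filter (fun x => ψ i x = true), (if x = f j then ε j else 0)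
          = if j = i then 0 else ε j := by
      intro j _
      rw [Finset.sum_ite_eq' _ (f j) (fun _ => ε j)]
      by_cases hji : j = i
      · subst hji
        rw [if_neg, if_pos rfl]
        simp [(hfspec j).2]
      · rw [if_pos, if_neg hji]
        simp [(hfspec j).1 i (fun h => hji h.symm)]
    rw [Finset.sum_congr rfl hterm]
    have : ∑ j, (if j = i then 0 else ε j) = (∑ j, ε j) - ε i := by
      have h2 : ∑ j, (if j = i then ε j else 0) = ε i := by
        rw [Finset.sum_ite_eq' Finset.univ i ε]; simp
      have h3 : ∑ j, ((if j = i then ε j else 0) + (if j = i then 0 else ε j))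
          = ∑ j, ε j := by
        apply Finset.sum_congr rfl
        intro j _
        split <;> ring
      rw [Finset.sum_add_distrib, h2] at h3
      linarith
    rw [this]
    linarith
  · -- conjunction fails
    intro δ hδ hle
    have hval : ∑ x ∈ Finset.univ.filter (fun x => ∀ i, ψ i x = true), D' x
        = 1 - ∑ i, ε i := by
      rw [hD']
      rw [Finset.sum_add_distrib]
      rw [Finset.sum_ite_eq' _ x₀ (fun _ => 1 - ∑ j, ε j)]
      rw [Finset.sum_comm]
      have hmem : x₀ ∈ Finset.univ.filter (fun x => ∀ i, ψ i x = true) := by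
        simp [hx₀]
      rw [if_pos hmem]
      have hterm : ∀ j ∈ (Finset.univ : Finset (Fin k)),
          ∑ x ∈ Finset.univ.filter (fun x => ∀ i, ψ i x = true),
            (if x = f j then ε j else 0) = 0 := by
        intro j _
        rw [Finset.sum_ite_eq' _ (f j) (fun _ => ε j)]
        rw [if_neg]
        intro hmem'
        rw [Finset.mem_filter] at hmem'
        have := hmem'.2 j
        rw [(hfspec j).2] at this
        exact Bool.false_ne_true this
      rw [Finset.sum_congr rfl hterm]
      simp
    rw [hval] at hle
    linarith
end

section
/- If ψ = [∑_i (d·c_i)x_i ≥ b] is witnessed true under partial assignment ρ (over Boolean variables), then the divided formula [∑_i c_i x_i ≥ ⌈b/d⌉] is also witnessed true under ρ: specifically, if ∑_{i:ρ_i=1} d·c_i + ∑_{i:ρ_i=*} min{0, d·c_i} ≥ b for integers c_i, then ∑_{i:ρ_i=1} c_i + ∑_{i:ρ_i=*} min{0,c_i} ≥ ⌈b/d⌉. -/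
open Finset in
/-- Witnessed truth survives cutting-planes division: if
`∑ {i : ρ i = 1}, d·c i + ∑ {i : ρ i = *}, min 0 (d·c i) ≥ b` (i.e.,
`[∑ i, (d·c i)·x i ≥ b]` is witnessed true under `ρ`), then
`∑ {i : ρ i = 1}, c i + ∑ {i : ρ i = *}, min 0 (c i) ≥ ⌈b/d⌉`, so the divided
formula `[∑ i, c i · x i ≥ ⌈b/d⌉]` is also witnessed true under `ρ`. -/
theorem cutting_planes_division_witnessed
    (n : ℕ) (c : Fin n → ℤ) (b d : ℤ) (hd : 0 < d)
    (ρ : Fin n → Option Bool)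
    (hwit : b ≤ ∑ i ∈ univ.filter (fun i => ρ i = some true), d * c i
        + ∑ i ∈ univ.filter (fun i => ρ i = none), min 0 (d * c i)) :
    ⌈(b : ℚ) / d⌉ ≤ ∑ i ∈ univ.filter (fun i => ρ i = some true), c i
        + ∑ i ∈ univ.filter (fun i => ρ i = none), min 0 (c i) := by
  set S : ℤ := ∑ i ∈ univ.filter (fun i => ρ i = some true), c i
      + ∑ i ∈ univ.filter (fun i => ρ i = none), min 0 (c i) with hS
  have hdS : b ≤ d * S := by
    have : d * S = ∑ i ∈ univ.filter (fun i => ρ i = some true), d * c i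
        + ∑ i ∈ univ.filter (fun i => ρ i = none), min 0 (d * c i) := by
      rw [hS, mul_add, Finset.mul_sum, Finset.mul_sum]
      congr 1
      apply Finset.sum_congr rfl
      intro i _
      rw [mul_min_of_nonneg _ _ hd.le, mul_zero]
    omega
  rw [Int.ceil_le]
  have hdq : (0:ℚ) < (d:ℚ) := by exact_mod_cast hd
  rw [div_le_iff₀ hdq]
  have : (b:ℚ) ≤ (d:ℚ) * (S:ℚ) := by exact_mod_cast hdS
  linarith
end
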